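/- Let V be a complex vector space with basis (|k⟩)_{k∈ℕ} and P linear with P|k⟩ = a_{k+1}|k+1⟩ + b_k|k⟩ + c_k|k−1⟩ where all a_k ≠ 0. Equip Vⁿ with the standard M_n(ℂ)-module structure and the basis e_k = (|nk⟩,…,|nk+n−1⟩). Then the operator Pⁿ (acting componentwise) acts block-tridiagonally: Pⁿ·e_k = C_{k+1} e_{k+1} + B_k e_k + A_k e_{k−1} for matrices A_k, B_k, C_{k+1} ∈ M_n(ℂ), where A_k is upper triangular with j-th diagonal entry ∏_{i=0}^{n−1} c_{nk+j−1−i} (1 ≤ j ≤ n); in particular if all c_k ≠ 0 for the relevant indices then A_k is invertible. -/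

import Mathlib

/-!
Each application of `P` moves `|m⟩` by at most one step, so `Pⁿ|m⟩` is supported on
`[m - n, m + n]`; for `m` in the block `e_k` this meets only the blocks `e_{k-1}, e_k, e_{k+1}`.
Entry `(i, j)` of `A_k` is the coefficient of `|n(k-1) + j⟩` in `Pⁿ|nk + i⟩`, at distance
`n + i - j`: it vanishes for `j < i`, and for `i = j` the only path of length `n` is the straight
descent, which picks up the product of the `c`'s along the way.
-/

open Matrix

/-- The standard action of `n × n` matrices on `Vⁿ`:
`A • (v₁,…,vₙ) = (Σₖ a_{1k}vₖ, …, Σₖ a_{nk}vₖ)`. -/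
noncomputable instance matrixSMul {n : ℕ} {V : Type*} [AddCommGroup V] [Module ℂ V] :
    SMul (Matrix (Fin n) (Fin n) ℂ) (Fin n → V) :=
  ⟨fun A v i => ∑ k, A i k • v k⟩

theorem matrixSMul_apply {n : ℕ} {V : Type*} [AddCommGroup V] [Module ℂ V]
    (A : Matrix (Fin n) (Fin n) ℂ) (v : Fin n → V) (i : Fin n) :
    (A • v) i = ∑ k, A i k • v k := rfl

/-- `Vⁿ` is a left module over `M_n(ℂ)` for the standard action. -/
noncomputable instance matrixModule {n : ℕ} {V : Type*} [AddCommGroup V] [Module ℂ V] :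
    Module (Matrix (Fin n) (Fin n) ℂ) (Fin n → V) where
  one_smul v := funext fun i => by
    simp [matrixSMul_apply, Matrix.one_apply, ite_smul]
  mul_smul A B v := funext fun i => by
    simp only [matrixSMul_apply, Matrix.mul_apply, Finset.sum_smul, Finset.smul_sum, smul_smul]
    exact Finset.sum_comm
  smul_zero A := funext fun i => by simp [matrixSMul_apply]
  smul_add A u v := funext fun i => by
    simp [matrixSMul_apply, smul_add, Finset.sum_add_distrib]
  add_smul A B v := funext fun i => by
    simp [matrixSMul_apply, Matrix.add_apply, add_smul, Finset.sum_add_distrib]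
  zero_smul v := funext fun i => by simp [matrixSMul_apply]

theorem Finset.sum_Ico_mul_eq_sum_range_sum_fin {M : Type*} [AddCommMonoid M] (f : ℕ → M)
    (n lo : ℕ) :
    ∀ r, ∑ ℓ ∈ Finset.Ico (n * lo) (n * (lo + r)), f ℓ =
      ∑ k ∈ Finset.range r, ∑ j : Fin n, f (n * (lo + k) + j)
  | 0 => by simp
  | r + 1 => by
    have hblock : n * (lo + (r + 1)) = n * (lo + r) + n := Nat.mul_succ n (lo + r)
    rw [Finset.sum_range_succ, ← Finset.sum_Ico_mul_eq_sum_range_sum_fin f n lo r, hblock,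
      ← Finset.sum_Ico_consecutive _ (Nat.mul_le_mul_left n (Nat.le_add_right lo r))
        (Nat.le_add_right _ n),
      Finset.sum_Ico_eq_sum_range f (n * (lo + r)), Nat.add_sub_cancel_left,
      Fin.sum_univ_eq_sum_range (fun j => f (n * (lo + r) + j))]

theorem Module.Basis.sum_Ico_repr_smul {R V : Type*} [Semiring R] [AddCommMonoid V]
    [Module R V] (b : Module.Basis ℕ R V) {x : V} {lo hi : ℕ}
    (hx : ∀ ℓ, b.repr x ℓ ≠ 0 → lo ≤ ℓ ∧ ℓ < hi) :
    ∑ ℓ ∈ Finset.Ico lo hi, b.repr x ℓ • b ℓ = x := by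
  conv_rhs => rw [← b.linearCombination_repr x, Finsupp.linearCombination_apply]
  refine (Finsupp.sum_of_support_subset _ (fun ℓ hℓ => ?_) (fun ℓ r => r • b ℓ)
    fun _ _ => zero_smul R _).symm
  simpa using hx ℓ (Finsupp.mem_support_iff.mp hℓ)

theorem Matrix.IsUpperTriangular.isUnit {K m : Type*} [Field K] [Fintype m] [LinearOrder m]
    {M : Matrix m m K} (hM : M.IsUpperTriangular) (hdiag : ∀ i, M i i ≠ 0) : IsUnit M := by
  rw [Matrix.isUnit_iff_isUnit_det, Matrix.det_of_isUpperTriangular hM]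
  exact IsUnit.mk0 _ (Finset.prod_ne_zero_iff.mpr fun i _ => hdiag i)

/-- The `M_n(R)`-coefficient of `v` along `e_k = (b (n k), …, b (n k + n - 1))`. -/
noncomputable def blockCoeff {R V : Type*} [Semiring R] [AddCommMonoid V] [Module R V] {n : ℕ}
    (b : Module.Basis ℕ R V) (v : Fin n → V) (k : ℕ) : Matrix (Fin n) (Fin n) R :=
  Matrix.of fun i j => b.repr (v i) (n * k + j)

theorem eq_sum_blockCoeff_smul {V : Type*} [AddCommGroup V] [Module ℂ V] {n : ℕ}
    (b : Module.Basis ℕ ℂ V) {v : Fin n → V} {lo r : ℕ}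
    (hv : ∀ i ℓ, b.repr (v i) ℓ ≠ 0 → n * lo ≤ ℓ ∧ ℓ < n * (lo + r)) :
    v = ∑ k ∈ Finset.range r,
      blockCoeff b v (lo + k) • fun j : Fin n => b (n * (lo + k) + j) := by
  funext i
  simp only [Finset.sum_apply, matrixSMul_apply, blockCoeff, Matrix.of_apply]
  rw [← Finset.sum_Ico_mul_eq_sum_range_sum_fin (fun ℓ => b.repr (v i) ℓ • b ℓ),
    b.sum_Ico_repr_smul (hv i)]

/-- Since `0 - 1 = 0` in `ℕ`, at `m = 0` this reads
`P (b 0) = a 1 • b 1 + (d 0 + c 0) • b 0`. -/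
def Module.End.IsTridiagonal {R V : Type*} [Semiring R] [AddCommMonoid V] [Module R V]
    (P : Module.End R V) (b : Module.Basis ℕ R V) (a d c : ℕ → R) : Prop :=
  ∀ m, P (b m) = a (m + 1) • b (m + 1) + d m • b m + c m • b (m - 1)

namespace Module.End.IsTridiagonal

section Semiring

variable {R V : Type*} [Semiring R] [AddCommMonoid V] [Module R V]
  {b : Module.Basis ℕ R V} {P : Module.End R V} {a d c : ℕ → R} {n : ℕ}

theorem of_apply_zero_of_apply_succ (hP0 : P (b 0) = a 1 • b 1 + d 0 • b 0)
    (hPs : ∀ k, P (b (k + 1)) =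
      a (k + 2) • b (k + 2) + d (k + 1) • b (k + 1) + c (k + 1) • b k) :
    P.IsTridiagonal b a d (Function.update c 0 0)
  | 0 => by simp [hP0]
  | k + 1 => by simpa using hPs k

theorem repr_pow_apply_eq_zero (hP : P.IsTridiagonal b a d c) :
    ∀ {N m ℓ : ℕ}, ℓ + N < m ∨ m + N < ℓ → b.repr ((P ^ N) (b m)) ℓ = 0
  | 0, m, ℓ, h => by simp [show m ≠ ℓ by omega]
  | N + 1, m, ℓ, h => by
    rw [pow_succ, Module.End.mul_apply, hP m]
    simp only [map_add, map_smul, Finsupp.add_apply, Finsupp.smul_apply, smul_eq_mul,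
      hP.repr_pow_apply_eq_zero (show ℓ + N < m + 1 ∨ m + 1 + N < ℓ by omega),
      hP.repr_pow_apply_eq_zero (show ℓ + N < m ∨ m + N < ℓ by omega),
      hP.repr_pow_apply_eq_zero (show ℓ + N < m - 1 ∨ m - 1 + N < ℓ by omega)]
    simp

theorem repr_pow_apply_block_ne_zero (hP : P.IsTridiagonal b a d c) (k : ℕ) (i : Fin n)
    {ℓ : ℕ} (h : b.repr ((P ^ n) (b (n * k + i))) ℓ ≠ 0) :
    n * k ≤ ℓ + n ∧ ℓ < n * (k + 2) := by
  have := mt hP.repr_pow_apply_eq_zero h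
  rw [mul_add]
  omega

theorem blockCoeff_pow_isUpperTriangular (hP : P.IsTridiagonal b a d c) (k : ℕ) :
    (blockCoeff b (fun i : Fin n => (P ^ n) (b (n * (k + 1) + i))) k).IsUpperTriangular := by
  intro i j (hji : (j : ℕ) < i)
  exact hP.repr_pow_apply_eq_zero (.inl (by rw [Nat.mul_succ]; omega))

end Semiring

section CommSemiring

variable {R V : Type*} [CommSemiring R] [AddCommMonoid V] [Module R V]
  {b : Module.Basis ℕ R V} {P : Module.End R V} {a d c : ℕ → R} {n : ℕ}

theorem repr_pow_apply_sub (hP : P.IsTridiagonal b a d c) :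
    ∀ {N m : ℕ}, N ≤ m →
      b.repr ((P ^ N) (b m)) (m - N) = ∏ i ∈ Finset.range N, c (m - i)
  | 0, m, _ => by simp
  | N + 1, m, h => by
    have hlow : b.repr ((P ^ N) (b (m - 1))) (m - (N + 1)) =
        ∏ i ∈ Finset.range N, c (m - (i + 1)) := by
      rw [show m - (N + 1) = m - 1 - N by omega, hP.repr_pow_apply_sub (by omega)]
      exact Finset.prod_congr rfl fun i _ => by rw [Nat.sub_sub, add_comm 1 i]
    rw [pow_succ, Module.End.mul_apply, hP m]
    simp only [map_add, map_smul, Finsupp.add_apply, Finsupp.smul_apply, smul_eq_mul,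
      hP.repr_pow_apply_eq_zero (.inl (show m - (N + 1) + N < m + 1 by omega)),
      hP.repr_pow_apply_eq_zero (.inl (show m - (N + 1) + N < m by omega)), hlow,
      Finset.prod_range_succ' _ N, Nat.sub_zero]
    ring

theorem blockCoeff_pow_apply_self (hP : P.IsTridiagonal b a d c) (k : ℕ) (j : Fin n) :
    blockCoeff b (fun i : Fin n => (P ^ n) (b (n * (k + 1) + i))) k j j =
      ∏ i ∈ Finset.range n, c (n * (k + 1) + j - i) := by
  rw [blockCoeff, Matrix.of_apply, Nat.mul_succ, show n * k + j = n * k + n + j - n by omega]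
  exact hP.repr_pow_apply_sub (by omega)

end CommSemiring

end Module.End.IsTridiagonal

theorem power_block_tridiagonal_general {n : ℕ} {V : Type*} [AddCommGroup V]
    [Module ℂ V] (b : Module.Basis ℕ ℂ V) (P : Module.End ℂ V) (a bd c : ℕ → ℂ)
    (hP0 : P (b 0) = a 1 • b 1 + bd 0 • b 0)
    (hPs : ∀ k : ℕ, P (b (k + 1)) =
      a (k + 2) • b (k + 2) + bd (k + 1) • b (k + 1) + c (k + 1) • b k)
    (e : ℕ → Fin n → V) (he : ∀ (k : ℕ) (j : Fin n), e k j = b (n * k + j)) :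
    ∃ A B C : ℕ → Matrix (Fin n) (Fin n) ℂ,
      ((fun i => (P ^ n) (e 0 i)) = C 1 • e 1 + B 0 • e 0) ∧
      (∀ k : ℕ, (fun i => (P ^ n) (e (k + 1) i)) =
        C (k + 2) • e (k + 2) + B (k + 1) • e (k + 1) + A (k + 1) • e k) ∧
      (∀ (k : ℕ) (i j : Fin n), j < i → A (k + 1) i j = 0) ∧
      (∀ (k : ℕ) (j : Fin n),
        A (k + 1) j j = ∏ i ∈ Finset.range n, c (n * (k + 1) + j - i)) ∧
      ((∀ m : ℕ, 1 ≤ m → c m ≠ 0) → ∀ k : ℕ, IsUnit (A (k + 1))) := by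
  obtain rfl : e = fun k (j : Fin n) => b (n * k + j) := funext₂ he
  have hP := Module.End.IsTridiagonal.of_apply_zero_of_apply_succ hP0 hPs
  have hindex (k : ℕ) (j : Fin n) (i : ℕ) (hi : i < n) : 1 ≤ n * (k + 1) + j - i := by
    rw [Nat.mul_succ]
    omega
  have hdiag (k : ℕ) (j : Fin n) :
      blockCoeff b (fun i => (P ^ n) (b (n * (k + 1) + i))) k j j =
        ∏ i ∈ Finset.range n, c (n * (k + 1) + j - i) :=
    (hP.blockCoeff_pow_apply_self k j).trans <| Finset.prod_congr rfl fun i hi =>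
      Function.update_of_ne (Nat.one_le_iff_ne_zero.mp (hindex k j i (Finset.mem_range.mp hi))) _ _
  refine ⟨fun k => blockCoeff b (fun i => (P ^ n) (b (n * k + i))) (k - 1),
    fun k => blockCoeff b (fun i => (P ^ n) (b (n * k + i))) k,
    fun k => blockCoeff b (fun i => (P ^ n) (b (n * (k - 1) + i))) k, ?_, fun k => ?_,
    fun k _ _ hji => hP.blockCoeff_pow_isUpperTriangular k hji, hdiag, fun hc k =>
      (hP.blockCoeff_pow_isUpperTriangular k).isUnit fun j => by
        rw [hdiag]
        exact Finset.prod_ne_zero_iff.mpr fun i hi =>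
          hc _ (hindex k j i (Finset.mem_range.mp hi))⟩
  · refine (eq_sum_blockCoeff_smul b (lo := 0) (r := 2) fun i ℓ h => ?_).trans ?_
    · simpa using (hP.repr_pow_apply_block_ne_zero 0 i h).2
    · simp [Finset.sum_range_succ, add_comm]
  · refine (eq_sum_blockCoeff_smul b (lo := k) (r := 3) fun i ℓ h => ?_).trans ?_
    · have := hP.repr_pow_apply_block_ne_zero (k + 1) i h
      simp only [Nat.mul_succ, mul_add] at this ⊢
      omega
    · simp only [Finset.sum_range_succ, Finset.range_one, Finset.sum_singleton, add_zero,
        Nat.add_one_sub_one, add_tsub_cancel_right]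
      abel

/-- Let `P` act tridiagonally on a basis `(|k⟩)_{k∈ℕ}` of `V`, with all `a_k ≠ 0`, and equip
`Vⁿ` with the standard `M_n(ℂ)`-module structure and the `M_n(ℂ)`-basis
`e_k = (|nk⟩, …, |nk+n−1⟩)`.  Then `Pⁿ` (acting componentwise) acts block-tridiagonally:
`Pⁿ·e_k = C_{k+1} e_{k+1} + B_k e_k + A_k e_{k−1}` with `A_k` upper triangular whose `j`-th
diagonal entry is `∏_{i=0}^{n−1} c_{nk+j−1−i}` (here `j` is 0-indexed, so the entry at
`(j,j)` is `∏_{i=0}^{n−1} c_{nk+j−i}`); in particular `A_k` is invertible whenever the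
relevant `c`'s are nonzero. -/
theorem power_block_tridiagonal {n : ℕ} (hn : 0 < n) {V : Type*} [AddCommGroup V]
    [Module ℂ V] (b : Module.Basis ℕ ℂ V) (P : Module.End ℂ V) (a bd c : ℕ → ℂ)
    (ha : ∀ k : ℕ, a k ≠ 0)
    (hP0 : P (b 0) = a 1 • b 1 + bd 0 • b 0)
    (hPs : ∀ k : ℕ, P (b (k + 1)) =
      a (k + 2) • b (k + 2) + bd (k + 1) • b (k + 1) + c (k + 1) • b k)
    (e : ℕ → Fin n → V) (he : ∀ (k : ℕ) (j : Fin n), e k j = b (n * k + j)) :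
    ∃ A B C : ℕ → Matrix (Fin n) (Fin n) ℂ,
      ((fun i => (P ^ n) (e 0 i)) = C 1 • e 1 + B 0 • e 0) ∧
      (∀ k : ℕ, (fun i => (P ^ n) (e (k + 1) i)) =
        C (k + 2) • e (k + 2) + B (k + 1) • e (k + 1) + A (k + 1) • e k) ∧
      (∀ (k : ℕ) (i j : Fin n), j < i → A (k + 1) i j = 0) ∧
      (∀ (k : ℕ) (j : Fin n),
        A (k + 1) j j = ∏ i ∈ Finset.range n, c (n * (k + 1) + j - i)) ∧
      ((∀ m : ℕ, 1 ≤ m → c m ≠ 0) → ∀ k : ℕ, IsUnit (A (k + 1))) :=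
  power_block_tridiagonal_general b P a bd c hP0 hPs e he
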